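/- arXiv:1303.2870 — 3 statements merged into one kernel-verified Lean document; each statement's English description precedes it below -/
import Mathlib

section
/- Let ω > 0, a > 0, and c > 0 be real numbers. The function g(p) = ω log₂(1 + a p) − c p on the half-line p ≥ 0 attains its maximum at p* = max(ω/(c ln 2) − 1/a, 0); that is, g(p) ≤ g(p*) for every p ≥ 0. (Closed-form per-user power allocation, equation (19).) -/
/-!
`g p = ω logb b (1 + a p) - c p` is concave, so it lies below each of its tangent lines.
At `p* = max (ω / (c log b) - 1 / a) 0` the slope `g' p* = ω a / ((1 + a p*) log b) - c`
vanishes when `p*` is interior and is `≤ 0` when `p* = 0`; in both cases the tangent line at `p*`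
is `≤ g p*` on `p ≥ 0`.
-/

open Real

namespace Waterfilling

theorem log_le_log_add_sub_div {x y : ℝ} (hx : 0 < x) (hy : 0 < y) :
    log y ≤ log x + (y - x) / x := by
  have h := log_le_sub_one_of_pos (div_pos hy hx)
  rw [log_div hy.ne' hx.ne', div_sub_one hx.ne'] at h
  linarith

theorem logb_le_logb_add_sub_div {b x y : ℝ} (hb : 1 < b) (hx : 0 < x) (hy : 0 < y) :
    logb b y ≤ logb b x + (y - x) / (x * log b) := by
  have hlogb : 0 < log b := log_pos hb
  simp only [logb, ← div_div, ← add_div]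
  exact div_le_div_of_nonneg_right (log_le_log_add_sub_div hx hy) hlogb.le

theorem mul_logb_sub_le_tangent {b ω a c p q : ℝ} (hb : 1 < b) (hω : 0 ≤ ω)
    (hp : 0 < 1 + a * p) (hq : 0 < 1 + a * q) :
    ω * logb b (1 + a * p) - c * p ≤
      ω * logb b (1 + a * q) - c * q + (p - q) * (ω * a / ((1 + a * q) * log b) - c) := by
  have h := mul_le_mul_of_nonneg_left (logb_le_logb_add_sub_div hb hq hp) hω
  have hslope : ω * ((1 + a * p - (1 + a * q)) / ((1 + a * q) * log b)) =
      (p - q) * (ω * a / ((1 + a * q) * log b)) := by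
    field_simp
    ring
  linarith

/-- The water-filling power level `p*` of equation (19), for logarithms to base `b`. -/
noncomputable def optimalPower (b ω a c : ℝ) : ℝ :=
  max (ω / (c * log b) - 1 / a) 0

theorem optimalPower_nonneg (b ω a c : ℝ) : 0 ≤ optimalPower b ω a c :=
  le_max_right _ _

theorem sub_optimalPower_mul_slope_nonpos {b ω a c p : ℝ} (hb : 1 < b) (ha : 0 < a)
    (hc : 0 < c) (hp : 0 ≤ p) :
    (p - optimalPower b ω a c) *
      (ω * a / ((1 + a * optimalPower b ω a c) * log b) - c) ≤ 0 := by
  have hlogb : 0 < log b := log_pos hb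
  rcases le_or_gt (ω / (c * log b) - 1 / a) 0 with h | h
  · have hq : optimalPower b ω a c = 0 := max_eq_right h
    have hslope : ω * a / log b ≤ c := by
      rw [div_le_iff₀ hlogb]
      have h' : ω / (c * log b) ≤ 1 / a := by linarith
      rw [div_le_div_iff₀ (by positivity) ha] at h'
      linarith
    rw [hq, mul_zero, add_zero, one_mul, sub_zero]
    exact mul_nonpos_of_nonneg_of_nonpos hp (by linarith)
  · have hq : optimalPower b ω a c = ω / (c * log b) - 1 / a := max_eq_left h.le
    have hlevel : 1 + a * optimalPower b ω a c = a * ω / (c * log b) := by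
      rw [hq]
      field_simp
      ring
    have hω : ω ≠ 0 := by
      rintro rfl
      simp only [zero_div, zero_sub, neg_pos] at h
      exact (one_div_pos.mpr ha).not_gt h
    have hslope : ω * a / ((1 + a * optimalPower b ω a c) * log b) - c = 0 := by
      rw [hlevel]
      field_simp
      ring
    rw [hslope, mul_zero]

end Waterfilling

open Waterfilling in
/-- Equation (19): for `ω, a, c > 0`, the function
`g(p) = ω log₂(1 + a p) − c p` on `p ≥ 0` attains its maximum at
`p* = max (ω/(c ln 2) − 1/a) 0`. -/
theorem waterfilling_maximizes (ω a c : ℝ) (hω : 0 < ω) (ha : 0 < a) (hc : 0 < c) :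
    ∀ p : ℝ, 0 ≤ p →
      ω * Real.logb 2 (1 + a * p) - c * p ≤
        ω * Real.logb 2 (1 + a * max (ω / (c * Real.log 2) - 1 / a) 0)
          - c * max (ω / (c * Real.log 2) - 1 / a) 0 := by
  intro p hp
  have hq := optimalPower_nonneg 2 ω a c
  have hb : (1 : ℝ) < 2 := one_lt_two
  calc ω * logb 2 (1 + a * p) - c * p
      ≤ ω * logb 2 (1 + a * optimalPower 2 ω a c) - c * optimalPower 2 ω a c +
          (p - optimalPower 2 ω a c) *
            (ω * a / ((1 + a * optimalPower 2 ω a c) * log 2) - c) :=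
        mul_logb_sub_le_tangent hb hω.le (by positivity) (by positivity)
    _ ≤ ω * logb 2 (1 + a * optimalPower 2 ω a c) - c * optimalPower 2 ω a c := by
        linarith [sub_optimalPower_mul_slope_nonpos (ω := ω) hb ha hc hp]
end

section
/- Suppose b_{ik} > 0 for all i, k, ω_k > 0 and a_k > 0 for all k, and μ is dual-feasible, i.e. μ_i ≥ 0 for all i, μ_i > 0 for at least one i, and β_{ij} μ_j ≤ μ_i for all i ≠ j. Define the water-filling powers p_k(μ) = max(ω_k/(ln 2 · ∑_i b_{ik} μ_i) − 1/a_k, 0). Then the pair (p(μ), 0) maximizes the Lagrangian over the nonnegative orthant: L(μ, p, e) ≤ L(μ, p(μ), 0) for all p with p_k ≥ 0 for all k and all e with e_{ij} ≥ 0 for all i ≠ j. -/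
/-!
Since `μ ≥ 0` has a positive entry and `b > 0`, every price `c_k = ∑_i b_{ik} μ_i` is positive, and
the Lagrangian separates into one concave problem `x ↦ ω_k log₂(1 + a_k x) − c_k x` per user plus a
term linear in `e`. The water-filling level is the point where the derivative of the concave term
meets the price (or `0` when the derivative at `0` is already below it), so the tangent-line bound
of `log` shows it is a global maximizer on `x ≥ 0`. Dual feasibility makes every coefficient
`β_{ij} μ_j − μ_i` of the energy term nonpositive, so `e = 0` is optimal there.
-/

open Finset

/-- The Lagrangian of problem (P1):
`L(μ,p,e) = ∑_k (ω_k log₂(1+a_k p_k) − (∑_i b_{ik} μ_i) p_k)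
  + ∑_{i≠j} (β_{ij} μ_j − μ_i) e_{ij} + ∑_i μ_i E_i`. -/
noncomputable def Lagrangian {N K : ℕ} (a : Fin K → ℝ) (b : Fin N → Fin K → ℝ)
    (ω : Fin K → ℝ) (E : Fin N → ℝ) (β : Fin N → Fin N → ℝ)
    (μ : Fin N → ℝ) (p : Fin K → ℝ) (e : Fin N → Fin N → ℝ) : ℝ :=
  (∑ k, (ω k * Real.logb 2 (1 + a k * p k) - (∑ i, b i k * μ i) * p k))
    + (∑ i, ∑ j, if i = j then 0 else (β i j * μ j - μ i) * e i j)
    + (∑ i, μ i * E i)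

/-- The water-filling power allocation
`p_k(μ) = max (ω_k/(ln 2 · ∑_i b_{ik} μ_i) − 1/a_k) 0`. -/
noncomputable def waterfillPower {N K : ℕ} (a : Fin K → ℝ) (b : Fin N → Fin K → ℝ)
    (ω : Fin K → ℝ) (μ : Fin N → ℝ) (k : Fin K) : ℝ :=
  max (ω k / (Real.log 2 * ∑ i, b i k * μ i) - 1 / a k) 0

namespace Real

theorem log_le_log_add_sub_div {u v : ℝ} (hu : 0 < u) (hv : 0 < v) :
    log u ≤ log v + (u - v) / v := by
  have h := log_le_sub_one_of_pos (div_pos hu hv)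
  rw [log_div hu.ne' hv.ne', div_sub_one hv.ne'] at h
  linarith

end Real

section WaterLevel

variable {w a c : ℝ}

noncomputable def waterLevel (w a c : ℝ) : ℝ := max (w / c - 1 / a) 0

theorem waterLevel_nonneg : 0 ≤ waterLevel w a c := le_max_right _ _

/-- First-order optimality at the water level: the derivative `w a / (1 + a q)` equals the price `c`
when `q > 0` and is at most `c` when `q = 0`. -/
theorem mul_div_one_add_mul_waterLevel_mul_sub_le (ha : 0 < a) (hc : 0 < c)
    {x : ℝ} (hx : 0 ≤ x) :
    w * a / (1 + a * waterLevel w a c) * (x - waterLevel w a c) ≤ c * (x - waterLevel w a c) := by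
  rcases le_or_gt (w / c - 1 / a) 0 with hdry | hwet
  · have hq : waterLevel w a c = 0 := max_eq_right hdry
    have hslope : w * a ≤ c := by
      have h := (div_le_div_iff₀ hc ha).mp (sub_nonpos.mp hdry)
      linarith
    rw [hq]
    simpa using mul_le_mul_of_nonneg_right hslope hx
  · have hq : waterLevel w a c = w / c - 1 / a := max_eq_left hwet.le
    have hw : 0 < w := (div_pos_iff_of_pos_right hc).mp <| by linarith [one_div_pos.mpr ha]
    have hlevel : 1 + a * waterLevel w a c = a * w / c := by
      rw [hq]; field_simp; ring
    rw [hlevel, show w * a / (a * w / c) = c by field_simp]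

theorem mul_log_one_add_mul_sub_mul_le_waterLevel (hw : 0 ≤ w) (ha : 0 < a) (hc : 0 < c)
    {x : ℝ} (hx : 0 ≤ x) :
    w * Real.log (1 + a * x) - c * x ≤
      w * Real.log (1 + a * waterLevel w a c) - c * waterLevel w a c := by
  set q := waterLevel w a c
  have hq : 0 < 1 + a * q := by nlinarith [waterLevel_nonneg (w := w) (a := a) (c := c)]
  have htangent := Real.log_le_log_add_sub_div (show 0 < 1 + a * x by nlinarith) hq
  have hslope := mul_div_one_add_mul_waterLevel_mul_sub_le (w := w) ha hc hx
  calc w * Real.log (1 + a * x) - c * x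
      ≤ w * (Real.log (1 + a * q) + (1 + a * x - (1 + a * q)) / (1 + a * q)) - c * x := by
        gcongr
    _ = w * Real.log (1 + a * q) + w * a / (1 + a * q) * (x - q) - c * x := by ring
    _ ≤ w * Real.log (1 + a * q) - c * q := by linarith

end WaterLevel

theorem waterfillPower_eq_waterLevel {N K : ℕ} (a : Fin K → ℝ) (b : Fin N → Fin K → ℝ)
    (ω : Fin K → ℝ) (μ : Fin N → ℝ) (k : Fin K) :
    waterfillPower a b ω μ k = waterLevel (ω k / Real.log 2) (a k) (∑ i, b i k * μ i) := by
  rw [waterfillPower, waterLevel, div_div]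

theorem mul_logb_one_add_mul_sub_mul_le_waterLevel {ω a c x : ℝ} (hω : 0 ≤ ω) (ha : 0 < a)
    (hc : 0 < c) (hx : 0 ≤ x) :
    ω * Real.logb 2 (1 + a * x) - c * x ≤
      ω * Real.logb 2 (1 + a * waterLevel (ω / Real.log 2) a c)
        - c * waterLevel (ω / Real.log 2) a c := by
  have hlogb (y : ℝ) : ω * Real.logb 2 y = ω / Real.log 2 * Real.log y := by
    rw [Real.logb]; ring
  simp only [hlogb]
  exact mul_log_one_add_mul_sub_mul_le_waterLevel (div_nonneg hω (Real.log_pos one_lt_two).le)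
    ha hc hx

theorem sum_transfer_nonpos {N : ℕ} (β : Fin N → Fin N → ℝ) {μ : Fin N → ℝ}
    (hμ_feas : ∀ i j, i ≠ j → β i j * μ j ≤ μ i) {e : Fin N → Fin N → ℝ}
    (he : ∀ i j, i ≠ j → 0 ≤ e i j) :
    (∑ i, ∑ j, if i = j then 0 else (β i j * μ j - μ i) * e i j) ≤ 0 := by
  refine sum_nonpos fun i _ ↦ sum_nonpos fun j _ ↦ ?_
  split_ifs with hij
  · exact le_rfl
  · exact mul_nonpos_of_nonpos_of_nonneg (sub_nonpos.mpr (hμ_feas i j hij)) (he i j hij)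

/-- For dual-feasible `μ`, the pair `(p(μ), 0)` maximizes the Lagrangian over
the nonnegative orthant. -/
theorem waterfill_maximizes_lagrangian {N K : ℕ}
    (a : Fin K → ℝ) (b : Fin N → Fin K → ℝ) (ω : Fin K → ℝ)
    (E : Fin N → ℝ) (β : Fin N → Fin N → ℝ)
    (hb : ∀ i k, 0 < b i k) (hω : ∀ k, 0 < ω k) (ha : ∀ k, 0 < a k)
    (μ : Fin N → ℝ)
    (hμ_nonneg : ∀ i, 0 ≤ μ i)
    (hμ_pos : ∃ i, 0 < μ i)
    (hμ_feas : ∀ i j : Fin N, i ≠ j → β i j * μ j ≤ μ i) :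
    ∀ (p : Fin K → ℝ) (e : Fin N → Fin N → ℝ),
      (∀ k, 0 ≤ p k) → (∀ i j, i ≠ j → 0 ≤ e i j) →
      Lagrangian a b ω E β μ p e ≤
        Lagrangian a b ω E β μ (waterfillPower a b ω μ) 0 := by
  intro p e hp he
  have hprice : ∀ k, 0 < ∑ i, b i k * μ i := fun k ↦
    let ⟨i, hi⟩ := hμ_pos
    sum_pos' (fun i _ ↦ mul_nonneg (hb i k).le (hμ_nonneg i)) ⟨i, mem_univ i, mul_pos (hb i k) hi⟩
  have hno_transfer : (∑ i, ∑ j, if i = j then 0 else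
      (β i j * μ j - μ i) * (0 : Fin N → Fin N → ℝ) i j) = 0 := by simp
  unfold Lagrangian
  rw [hno_transfer]
  gcongr ?_ + ?_ + ?_
  · refine sum_le_sum fun k _ ↦ ?_
    rw [waterfillPower_eq_waterLevel]
    exact mul_logb_one_add_mul_sub_mul_le_waterLevel (hω k).le (ha k) (hprice k) (hp k)
  · exact sum_transfer_nonpos β hμ_feas he
  · exact le_rfl
end

section
/- Suppose β_{ij} = 1 for all i ≠ j (ideal lossless energy sharing), b_{ik} ≥ 0 for all i, k, and E_i are arbitrary reals. For any p with p_k ≥ 0 for all k, the following are equivalent: (i) there exists e with e_{ij} ≥ 0 for all i ≠ j such that ∑_k b_{ik} p_k ≤ E_i + ∑_{j≠i} e_{ji} − ∑_{j≠i} e_{ij} for every i; (ii) the single sum-power constraint ∑_i ∑_k b_{ik} p_k ≤ ∑_i E_i holds. (With ideal energy cooperation the N per-BS power constraints reduce to one sum-power constraint.) -/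
/-!
Summing the per-node constraints, every transfer cancels, being counted once as inflow and once
as outflow, so total demand is at most total supply. Conversely, when it is, a hub that collects
every surplus and covers every deficit meets all the per-node constraints.
-/

open Finset

section EnergySharing

variable {ι : Type*} [Fintype ι] {M : Type*} [AddCommGroup M]

lemma sum_ite_eq_zero_else_eq_sub [DecidableEq ι] (i : ι) (f : ι → M) :
    (∑ j, if j = i then 0 else f j) = ∑ j, f j - f i := by
  rw [← Fintype.sum_ite_eq' i f, ← sum_sub_distrib]
  exact sum_congr rfl fun j _ => by split_ifs <;> simp

/-- `e i j` is the amount sent from `i` to `j`. -/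
def netInflow (e : ι → ι → M) (i : ι) : M :=
  ∑ j, e j i - ∑ j, e i j

/-- Self-transfers `e i i` cancel, so they may be dropped from both sums. -/
lemma netInflow_eq_sub_offDiag [DecidableEq ι] (e : ι → ι → M) (i : ι) :
    netInflow e i =
      (∑ j, if j = i then 0 else e j i) - (∑ j, if j = i then 0 else e i j) := by
  simp only [netInflow, sum_ite_eq_zero_else_eq_sub]
  abel

lemma sum_netInflow (e : ι → ι → M) : ∑ i, netInflow e i = 0 := by
  simp only [netInflow, sum_sub_distrib]
  rw [sum_comm, sub_self]

/-- Route everything through the hub `i₀`: node `i` sends `(t i)⁻` to the hub, which sends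
`(t i)⁺` back. -/
lemma exists_nonneg_netInflow_eq [DecidableEq ι] {α : Type*} [Lattice α] [AddCommGroup α]
    [AddLeftMono α] (i₀ : ι) (t : ι → α) (ht : ∑ i, t i = 0) :
    ∃ e : ι → ι → α, (∀ i j, 0 ≤ e i j) ∧ netInflow e = t := by
  refine ⟨fun i j => (if j = i₀ then (t i)⁻ else 0) + (if i = i₀ then (t j)⁺ else 0),
    fun i j => add_nonneg (by split_ifs <;> simp [negPart_nonneg])
      (by split_ifs <;> simp [posPart_nonneg]), funext fun i => ?_⟩
  have hbalance : ∑ j, (t j)⁺ = ∑ j, (t j)⁻ := by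
    rw [← sub_eq_zero, ← sum_sub_distrib]
    simpa only [posPart_sub_negPart] using ht
  simp only [netInflow, sum_add_distrib, sum_ite_eq', mem_univ, if_true]
  split_ifs with hi
  · conv_rhs => rw [← posPart_sub_negPart (t i)]
    rw [hbalance]
    abel
  · simp [posPart_sub_negPart]

theorem exists_transfer_le_iff_sum_le [DecidableEq ι] {α : Type*} [AddCommGroup α]
    [LinearOrder α] [IsOrderedAddMonoid α] (E d : ι → α) :
    (∃ e : ι → ι → α, (∀ i j, i ≠ j → 0 ≤ e i j) ∧ ∀ i, d i ≤ E i + netInflow e i) ↔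
      ∑ i, d i ≤ ∑ i, E i := by
  constructor
  · rintro ⟨e, -, he⟩
    calc ∑ i, d i ≤ ∑ i, (E i + netInflow e i) := sum_le_sum fun i _ => he i
      _ = ∑ i, E i := by rw [sum_add_distrib, sum_netInflow, add_zero]
  · intro hsum
    rcases isEmpty_or_nonempty ι with hι | ⟨⟨i₀⟩⟩
    · exact ⟨0, fun i => isEmptyElim i, fun i => isEmptyElim i⟩
    -- the hub `i₀` keeps the total surplus, every other node ends up exactly balanced
    let surplus : α := ∑ i, (E i - d i)
    obtain ⟨e, he, hnet⟩ := exists_nonneg_netInflow_eq i₀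
      (fun i => d i - E i + if i = i₀ then surplus else 0)
      (by simp only [sum_add_distrib, sum_ite_eq', mem_univ, if_true, surplus, sum_sub_distrib]
          abel)
    refine ⟨e, fun i j _ => he i j, fun i => ?_⟩
    have hsurplus : 0 ≤ if i = i₀ then surplus else 0 := by
      split_ifs
      · exact sub_nonneg.mpr hsum |>.trans_eq (sum_sub_distrib ..).symm
      · exact le_rfl
    calc d i ≤ d i + if i = i₀ then surplus else 0 := le_add_of_nonneg_right hsurplus
      _ = E i + (d i - E i + if i = i₀ then surplus else 0) := by abel
      _ = E i + netInflow e i := by rw [hnet]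

end EnergySharing

theorem ideal_sharing_iff_sum_power_general {N K : ℕ}
    (b : Fin N → Fin K → ℝ) (E : Fin N → ℝ)
    (p : Fin K → ℝ) :
    (∃ e : Fin N → Fin N → ℝ, (∀ i j : Fin N, i ≠ j → 0 ≤ e i j) ∧
      ∀ i, ∑ k, b i k * p k ≤
        E i + (∑ j, if j = i then 0 else e j i)
            - (∑ j, if j = i then 0 else e i j)) ↔
    (∑ i, ∑ k, b i k * p k ≤ ∑ i, E i) := by
  simp only [add_sub_assoc, ← netInflow_eq_sub_offDiag]
  exact exists_transfer_le_iff_sum_le E fun i => ∑ k, b i k * p k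

/-- With ideal lossless energy sharing (`β_{ij} = 1` for all `i ≠ j`), the `N`
per-BS power constraints with some nonnegative energy exchange are equivalent
to the single sum-power constraint. -/
theorem ideal_sharing_iff_sum_power {N K : ℕ}
    (b : Fin N → Fin K → ℝ) (E : Fin N → ℝ)
    (β : Fin N → Fin N → ℝ) (hβ : ∀ i j : Fin N, i ≠ j → β i j = 1)
    (hb : ∀ i k, 0 ≤ b i k)
    (p : Fin K → ℝ) (hp : ∀ k, 0 ≤ p k) :
    (∃ e : Fin N → Fin N → ℝ, (∀ i j : Fin N, i ≠ j → 0 ≤ e i j) ∧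
      ∀ i, ∑ k, b i k * p k ≤
        E i + (∑ j, if j = i then 0 else e j i)
            - (∑ j, if j = i then 0 else e i j)) ↔
    (∑ i, ∑ k, b i k * p k ≤ ∑ i, E i) :=
  ideal_sharing_iff_sum_power_general b E p
end
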